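/- Error bound for incremental Slepian-Wolf decoding before either marginal description is complete (case with both sources still being transmitted): Let X and Y be finite sets, (x₀,y₀) ∈ X × Y, and let ℓ_J : X × Y → ℕ be a lossless length function (|{(x,y) : ℓ_J(x,y) = l}| ≤ 2^l for every natural number l). Let k ≥ 1 and m ≥ 1 be integers, let r_x, r_y > 0 and ε > 0 be reals, and let L_x, L_y ≥ 0 be reals with m·r_x ≤ L_x and m·r_y ≤ L_y. Set θ = ((L_x − m·r_x) + (L_y − m·r_y))/k + ε. Let φ_x : X → Fin 2^{⌊m·r_x⌋} and φ_y : Y → Fin 2^{⌊m·r_y⌋} be independent uniformly random functions. Then the probability that there exists a pair (x̃,ỹ) with x̃ ≠ x₀, ỹ ≠ y₀, ℓ_J(x̃,ỹ) ≤ L_x + L_y − k·θ, φ_x(x̃) = φ_x(x₀), and φ_y(ỹ) = φ_y(y₀) is at most 8·2^{−k·ε}. -/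

import Mathlib

/-!
Union bound over the candidate pairs `(x̃, ỹ)`. For `x̃ ≠ x₀` and `ỹ ≠ y₀` a uniformly random
pair of binnings puts `x̃` in the bin of `x₀` and `ỹ` in the bin of `y₀` with probability
exactly `1 / (N_x N_y)`, where `N_x = 2^⌊m r_x⌋ ≥ 2^(m r_x - 1)` and likewise for `N_y`.
Losslessness of `ℓ_J` leaves fewer than `2^(⌊B⌋ + 1) ≤ 2 · 2^B` pairs with `ℓ_J ≤ B`, and the
choice of `θ` makes `B = L_x + L_y − kθ = m r_x + m r_y − kε`, so the bound is
`2 · 2^B / 2^(m r_x + m r_y - 2) = 8 · 2^(-kε)`.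
-/

open Finset

def IsLosslessLength {α : Type*} [Fintype α] (ℓ : α → ℕ) : Prop :=
  ∀ l : ℕ, #{a | ℓ a = l} ≤ 2 ^ l

namespace IsLosslessLength

variable {α : Type*} [Fintype α] {ℓ : α → ℕ}

theorem card_filter_le_lt_two_pow (hℓ : IsLosslessLength ℓ) (n : ℕ) :
    #{a | ℓ a ≤ n} < 2 ^ (n + 1) := by
  classical
  calc #{a | ℓ a ≤ n}
      ≤ #((range (n + 1)).biUnion fun l => ({a | ℓ a = l} : Finset α)) :=
        card_le_card fun a ha => by simp_all
    _ ≤ ∑ l ∈ range (n + 1), #{a | ℓ a = l} := card_biUnion_le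
    _ ≤ ∑ l ∈ range (n + 1), 2 ^ l := sum_le_sum fun l _ => hℓ l
    _ < 2 ^ (n + 1) := Nat.geomSum_lt le_rfl fun _ => mem_range.1

theorem card_filter_le_rpow (hℓ : IsLosslessLength ℓ) (B : ℝ) :
    (#{a | (ℓ a : ℝ) ≤ B} : ℝ) ≤ 2 * 2 ^ B := by
  rcases lt_or_ge B 0 with hB | hB
  · have : ({a | (ℓ a : ℝ) ≤ B} : Finset α) = ∅ :=
      filter_false_of_mem fun a _ h => (h.trans_lt hB).not_ge (Nat.cast_nonneg _)
    rw [this, card_empty, Nat.cast_zero]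
    positivity
  · have hsub : ({a | (ℓ a : ℝ) ≤ B} : Finset α) ⊆ ({a | ℓ a ≤ ⌊B⌋₊} : Finset α) :=
      monotone_filter_right _ fun a _ h => Nat.le_floor h
    calc (#{a | (ℓ a : ℝ) ≤ B} : ℝ) ≤ (2 : ℝ) ^ (⌊B⌋₊ + 1) := by
          exact_mod_cast (card_le_card hsub).trans (hℓ.card_filter_le_lt_two_pow _).le
      _ = 2 * 2 ^ (⌊B⌋₊ : ℝ) := by rw [Real.rpow_natCast, pow_succ, mul_comm]
      _ ≤ 2 * 2 ^ B := by gcongr; exacts [one_le_two, Nat.floor_le hB]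

end IsLosslessLength

theorem two_rpow_sub_one_le_two_pow_floor (t : ℝ) : (2 : ℝ) ^ (t - 1) ≤ 2 ^ ⌊t⌋₊ := by
  rw [← Real.rpow_natCast]
  exact Real.rpow_le_rpow_of_exponent_le one_le_two (Nat.sub_one_lt_floor t).le

section Binning

variable {X Y β γ : Type*} [Fintype X] [Fintype Y] [Fintype β] [Fintype γ]
  [DecidableEq X] [DecidableEq Y] [DecidableEq β] [DecidableEq γ]

theorem card_filter_apply_eq_apply_mul_card {x x₀ : X} (h : x ≠ x₀) :
    #{φ : X → β | φ x = φ x₀} * Fintype.card β = Fintype.card β ^ Fintype.card X := by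
  rw [← Fintype.card_fun, ← card_univ (α := β), ← card_product, ← card_univ]
  refine card_bij' (fun p _ => Function.update p.1 x p.2)
    (fun ψ _ => (Function.update ψ x (ψ x₀), ψ x)) (fun _ _ => mem_univ _) ?_ ?_ ?_
  · intro ψ _
    simp [Function.update_of_ne h.symm]
  · rintro ⟨φ, b⟩ hφ
    simp only [mem_product, mem_filter, mem_univ, true_and, and_true] at hφ
    simp [Function.update_of_ne h.symm, ← hφ]
  · intro ψ _
    simp

theorem card_filter_collision_mul_card {x x₀ : X} {y y₀ : Y} (hx : x ≠ x₀) (hy : y ≠ y₀) :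
    #{φ : (X → β) × (Y → γ) | φ.1 x = φ.1 x₀ ∧ φ.2 y = φ.2 y₀} *
        (Fintype.card β * Fintype.card γ) = Fintype.card ((X → β) × (Y → γ)) := by
  rw [← univ_product_univ, filter_product (fun φ : X → β => φ x = φ x₀)
    (fun φ : Y → γ => φ y = φ y₀), card_product, Fintype.card_prod, Fintype.card_fun, Fintype.card_fun,
    ← card_filter_apply_eq_apply_mul_card hx, ← card_filter_apply_eq_apply_mul_card hy]
  ring

open scoped Classical in
theorem card_filter_exists_collision_mul_card_le (x₀ : X) (y₀ : Y) (Q : X × Y → Prop) :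
    #{φ : (X → β) × (Y → γ) | ∃ x y, x ≠ x₀ ∧ y ≠ y₀ ∧ Q (x, y) ∧
        φ.1 x = φ.1 x₀ ∧ φ.2 y = φ.2 y₀} * (Fintype.card β * Fintype.card γ) ≤
      #{p | Q p} * Fintype.card ((X → β) × (Y → γ)) := by
  set S : Finset (X × Y) := {p | p.1 ≠ x₀ ∧ p.2 ≠ y₀ ∧ Q p}
  have hcover : ({φ : (X → β) × (Y → γ) | ∃ x y, x ≠ x₀ ∧ y ≠ y₀ ∧ Q (x, y) ∧
      φ.1 x = φ.1 x₀ ∧ φ.2 y = φ.2 y₀} : Finset _) ⊆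
      S.biUnion fun p => {φ | φ.1 p.1 = φ.1 x₀ ∧ φ.2 p.2 = φ.2 y₀} := by
    intro φ hφ
    obtain ⟨x, y, hx, hy, hQ, h⟩ := (mem_filter.1 hφ).2
    exact mem_biUnion.2 ⟨(x, y), by simp [S, hx, hy, hQ], by simpa using h⟩
  calc _ ≤ (∑ p ∈ S, #{φ : (X → β) × (Y → γ) | φ.1 p.1 = φ.1 x₀ ∧ φ.2 p.2 = φ.2 y₀}) *
          (Fintype.card β * Fintype.card γ) := by
        gcongr; exact (card_le_card hcover).trans card_biUnion_le
    _ = #S * Fintype.card ((X → β) × (Y → γ)) := by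
        rw [sum_mul, card_eq_sum_ones, sum_mul, one_mul]
        refine sum_congr rfl fun p hp => ?_
        have hp' := (mem_filter.1 hp).2
        exact card_filter_collision_mul_card hp'.1 hp'.2.1
    _ ≤ #{p | Q p} * Fintype.card ((X → β) × (Y → γ)) := by
        gcongr; exact monotone_filter_right _ fun p _ h => h.2.2

end Binning

open scoped Classical in
theorem incremental_sw_error_joint_general (X Y : Type*) [Fintype X] [Fintype Y]
    (x₀ : X) (y₀ : Y) (ℓJ : X × Y → ℕ)
    (hℓJ : ∀ l : ℕ, (Finset.univ.filter fun p : X × Y => ℓJ p = l).card ≤ 2 ^ l)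
    (k m : ℕ) (hk : 1 ≤ k) (rx ry ε Lx Ly : ℝ)
    (θ : ℝ) (hθ : θ = ((Lx - m * rx) + (Ly - m * ry)) / k + ε) :
    ((Finset.univ.filter
        fun φ : (X → Fin (2 ^ ⌊(m : ℝ) * rx⌋₊)) × (Y → Fin (2 ^ ⌊(m : ℝ) * ry⌋₊)) =>
        ∃ x : X, ∃ y : Y, x ≠ x₀ ∧ y ≠ y₀ ∧ (ℓJ (x, y) : ℝ) ≤ Lx + Ly - k * θ ∧
          φ.1 x = φ.1 x₀ ∧ φ.2 y = φ.2 y₀).card : ℝ) /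
      (Fintype.card
        ((X → Fin (2 ^ ⌊(m : ℝ) * rx⌋₊)) × (Y → Fin (2 ^ ⌊(m : ℝ) * ry⌋₊)))) ≤
      8 * (2 : ℝ) ^ (-(k : ℝ) * ε) := by
  have hB : Lx + Ly - k * θ = m * rx + m * ry - k * ε := by
    have hk₀ : (k : ℝ) ≠ 0 := Nat.cast_ne_zero.2 (Nat.one_le_iff_ne_zero.1 hk)
    rw [hθ]; field_simp; ring
  have hcount := card_filter_exists_collision_mul_card_le
    (β := Fin (2 ^ ⌊(m : ℝ) * rx⌋₊)) (γ := Fin (2 ^ ⌊(m : ℝ) * ry⌋₊)) x₀ y₀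
    fun p => (ℓJ p : ℝ) ≤ Lx + Ly - k * θ
  rw [Fintype.card_fin, Fintype.card_fin] at hcount
  calc _ ≤ (#{p | (ℓJ p : ℝ) ≤ Lx + Ly - k * θ} : ℝ) /
        ((2 ^ ⌊(m : ℝ) * rx⌋₊ : ℝ) * 2 ^ ⌊(m : ℝ) * ry⌋₊) := by
        rw [div_le_div_iff₀ (by positivity) (by positivity)]
        exact_mod_cast hcount
    _ ≤ 2 * 2 ^ (Lx + Ly - k * θ) / (2 ^ ((m : ℝ) * rx - 1) * 2 ^ ((m : ℝ) * ry - 1)) := by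
        gcongr
        exacts [IsLosslessLength.card_filter_le_rpow hℓJ _,
          two_rpow_sub_one_le_two_pow_floor _, two_rpow_sub_one_le_two_pow_floor _]
    _ = 8 * 2 ^ (-(k : ℝ) * ε) := by
        rw [hB, neg_mul, Real.rpow_neg zero_le_two]
        simp only [Real.rpow_sub two_pos, Real.rpow_add two_pos, Real.rpow_one]
        field_simp
        norm_num

open scoped Classical in
/-- Error bound for incremental Slepian-Wolf decoding while both sources are
still being transmitted: with `θ = ((L_x − m·r_x) + (L_y − m·r_y))/k + ε` and
independent uniformly random binnings `φ_x : X → Fin 2^⌊m·r_x⌋`,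
`φ_y : Y → Fin 2^⌊m·r_y⌋`, the probability that some pair `(x̃, ỹ)` with
`x̃ ≠ x₀`, `ỹ ≠ y₀` and `ℓ_J (x̃, ỹ) ≤ L_x + L_y − k·θ` collides with
`(x₀, y₀)` in both bins is at most `8 · 2^{−k·ε}`. -/
theorem incremental_sw_error_joint (X Y : Type*) [Fintype X] [Fintype Y]
    (x₀ : X) (y₀ : Y) (ℓJ : X × Y → ℕ)
    (hℓJ : ∀ l : ℕ, (Finset.univ.filter fun p : X × Y => ℓJ p = l).card ≤ 2 ^ l)
    (k m : ℕ) (hk : 1 ≤ k) (hm : 1 ≤ m) (rx ry ε Lx Ly : ℝ)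
    (hrx : 0 < rx) (hry : 0 < ry) (hε : 0 < ε) (hLx : 0 ≤ Lx) (hLy : 0 ≤ Ly)
    (hmx : (m : ℝ) * rx ≤ Lx) (hmy : (m : ℝ) * ry ≤ Ly)
    (θ : ℝ) (hθ : θ = ((Lx - m * rx) + (Ly - m * ry)) / k + ε) :
    ((Finset.univ.filter
        fun φ : (X → Fin (2 ^ ⌊(m : ℝ) * rx⌋₊)) × (Y → Fin (2 ^ ⌊(m : ℝ) * ry⌋₊)) =>
        ∃ x : X, ∃ y : Y, x ≠ x₀ ∧ y ≠ y₀ ∧ (ℓJ (x, y) : ℝ) ≤ Lx + Ly - k * θ ∧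
          φ.1 x = φ.1 x₀ ∧ φ.2 y = φ.2 y₀).card : ℝ) /
      (Fintype.card
        ((X → Fin (2 ^ ⌊(m : ℝ) * rx⌋₊)) × (Y → Fin (2 ^ ⌊(m : ℝ) * ry⌋₊)))) ≤
      8 * (2 : ℝ) ^ (-(k : ℝ) * ε) :=
  incremental_sw_error_joint_general X Y x₀ y₀ ℓJ hℓJ k m hk rx ry ε Lx Ly θ hθ
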